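/- Let Q be a finite qubit set and G ≤ V(Q) a subspace with k logical qubits (2k = dim C(G) − dim(G ∩ C(G))). Extend the qubit set to Q' = Q ∪ {a} where a is a fresh ancillary qubit, and regard vectors of V(Q) as vectors of V(Q') vanishing at a. Fix q ∈ Q and let G' = span(G ∪ {X_q + X_a, Z_a}) ≤ V(Q'). Then: (i) G' has the same number k of logical qubits, i.e. dim C(G') − dim(G' ∩ C(G')) = 2k; (ii) if k ≥ 1, the distance of G' equals the distance of G, i.e. the minimum weight of an element of C(S') \ G' (with S' = G' ∩ C(G')) equals the minimum weight of an element of C(S) \ G (with S = G ∩ C(G)). -/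

import Mathlib

set_option linter.unusedSectionVars false

open Finset Matrix

abbrev F2 : Type := ZMod 2

abbrev PauliSpace (Q : Type) := Q → F2 × F2

section Pauli

variable {Q : Type} [Fintype Q] [DecidableEq Q]

/-- Support of a Pauli vector. -/
def psupp (v : PauliSpace Q) : Finset Q := Finset.univ.filter (fun q => v q ≠ (0, 0))

/-- Weight of a Pauli vector. -/
def pwt (v : PauliSpace Q) : ℕ := (psupp v).card

/-- The symplectic form. -/
def omegaF (u v : PauliSpace Q) : F2 :=
  ∑ q, ((u q).1 * (v q).2 + (u q).2 * (v q).1)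

lemma omegaF_add_left (u v w : PauliSpace Q) :
    omegaF (u + v) w = omegaF u w + omegaF v w := by
  simp only [omegaF, Pi.add_apply, Prod.fst_add, Prod.snd_add, ← Finset.sum_add_distrib]
  exact Finset.sum_congr rfl (fun q _ => by ring)

lemma omegaF_smul_left (c : F2) (u w : PauliSpace Q) :
    omegaF (c • u) w = c * omegaF u w := by
  simp only [omegaF, Pi.smul_apply, Prod.smul_fst, Prod.smul_snd, smul_eq_mul,
    Finset.mul_sum]
  exact Finset.sum_congr rfl (fun q _ => by ring)

/-- Centralizer of a subspace w.r.t. the symplectic form. -/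
def pcent (G : Submodule F2 (PauliSpace Q)) : Submodule F2 (PauliSpace Q) where
  carrier := {v | ∀ g ∈ G, omegaF v g = 0}
  zero_mem' := by
    intro g _
    simp [omegaF]
  add_mem' := by
    intro a b ha hb g hg
    rw [omegaF_add_left, ha g hg, hb g hg, add_zero]
  smul_mem' := by
    intro c a ha g hg
    rw [omegaF_smul_left, ha g hg, mul_zero]

/-- Stabilizer group of a gauge group. -/
def pstab (G : Submodule F2 (PauliSpace Q)) : Submodule F2 (PauliSpace Q) := G ⊓ pcent G

/-- Single-qubit Pauli X vector. -/
def Xop (c : Q) : PauliSpace Q := fun q => if q = c then (1, 0) else (0, 0)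

/-- Single-qubit Pauli Z vector. -/
def Zop (c : Q) : PauliSpace Q := fun q => if q = c then (0, 1) else (0, 0)

/-- The set of weights of dressed logical operators; its infimum is the distance. -/
def distSet (G : Submodule F2 (PauliSpace Q)) : Set ℕ :=
  {w | ∃ v, v ∈ pcent (pstab G) ∧ v ∉ G ∧ pwt v = w}

/-- Pauli vectors supported in `M`. -/
def PMod (M : Finset Q) : Submodule F2 (PauliSpace Q) where
  carrier := {v | ∀ q, q ∉ M → v q = 0}
  zero_mem' := by intro q _; rfl
  add_mem' := by
    intro a b ha hb q hq
    simp [Pi.add_apply, ha q hq, hb q hq]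
  smul_mem' := by
    intro c a ha q hq
    simp [Pi.smul_apply, ha q hq]

/-- Projection onto the qubits in `M`. -/
def projL (M : Finset Q) : PauliSpace Q →ₗ[F2] PauliSpace Q where
  toFun v := fun q => if q ∈ M then v q else 0
  map_add' a b := by funext q; by_cases h : q ∈ M <;> simp [h]
  map_smul' c a := by funext q; by_cases h : q ∈ M <;> simp [h]

/-- Number of independent dressed logical operators supported in `M`. -/
noncomputable def lM (G : Submodule F2 (PauliSpace Q)) (M : Finset Q) : ℕ :=
  Module.finrank F2 ↥(pcent ((pstab G).map (projL M)) ⊓ PMod M)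
    - Module.finrank F2 ↥(G ⊓ PMod M)

/-- Number of independent bare logical operators supported in `M`. -/
noncomputable def lbareM (G : Submodule F2 (PauliSpace Q)) (M : Finset Q) : ℕ :=
  Module.finrank F2 ↥(pcent (G.map (projL M)) ⊓ PMod M)
    - Module.finrank F2 ↥(pstab G ⊓ PMod M)

end Pauli

section Classical

variable {ι : Type} [Fintype ι] [DecidableEq ι]

/-- Hamming weight of a classical vector. -/
def hwt (v : ι → F2) : ℕ := (Finset.univ.filter (fun i => v i ≠ 0)).card

/-- Row space of a matrix. -/
def Crow (A : Matrix ι ι F2) : Submodule F2 (ι → F2) := Submodule.span F2 (Set.range A)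

/-- Column space of a matrix. -/
def Ccol (A : Matrix ι ι F2) : Submodule F2 (ι → F2) := Submodule.span F2 (Set.range Aᵀ)

/-- Minimum distance of the row space. -/
noncomputable def drow (A : Matrix ι ι F2) : ℕ := sInf {w | ∃ v ∈ Crow A, v ≠ 0 ∧ hwt v = w}

/-- Minimum distance of the column space. -/
noncomputable def dcol (A : Matrix ι ι F2) : ℕ := sInf {w | ∃ v ∈ Ccol A, v ≠ 0 ∧ hwt v = w}

/-- Number of nonzero entries of a matrix. -/
def nnz (A : Matrix ι ι F2) : ℕ :=
  (Finset.univ.filter (fun p : ι × ι => A p.1 p.2 ≠ 0)).card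

end Classical

section BaconShor

variable {m : ℕ}

/-- Qubit set of the generalized Bacon-Shor code: cells with `A i j = 1`. -/
abbrev QA (A : Matrix (Fin m) (Fin m) F2) : Type := {c : Fin m × Fin m // A c.1 c.2 = 1}

/-- Generators of the gauge group. -/
def gaugeSet (A : Matrix (Fin m) (Fin m) F2) : Set (PauliSpace (QA A)) :=
  {v | ∃ c c' : QA A, c ≠ c' ∧
    ((c.1.1 = c'.1.1 ∧ v = Xop c + Xop c') ∨ (c.1.2 = c'.1.2 ∧ v = Zop c + Zop c'))}

/-- Gauge group of the generalized Bacon-Shor code. -/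
def gaugeBS (A : Matrix (Fin m) (Fin m) F2) : Submodule F2 (PauliSpace (QA A)) :=
  Submodule.span F2 (gaugeSet A)

/-- The row operator `R i`. -/
def Rop (A : Matrix (Fin m) (Fin m) F2) (i : Fin m) : PauliSpace (QA A) :=
  ∑ c ∈ Finset.univ.filter (fun c : QA A => c.1.1 = i), Zop c

/-- The column operator `C j`. -/
def Cop (A : Matrix (Fin m) (Fin m) F2) (j : Fin m) : PauliSpace (QA A) :=
  ∑ c ∈ Finset.univ.filter (fun c : QA A => c.1.2 = j), Xop c

/-- X-type operator parameterized by a binary vector. -/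
def PXop (A : Matrix (Fin m) (Fin m) F2) (x : Fin m → F2) : PauliSpace (QA A) :=
  ∑ j, x j • Cop A j

/-- Z-type operator parameterized by a binary vector. -/
def PZop (A : Matrix (Fin m) (Fin m) F2) (z : Fin m → F2) : PauliSpace (QA A) :=
  ∑ i, z i • Rop A i

end BaconShor

/-- Binary entropy. -/
noncomputable def H2 (p : ℝ) : ℝ := -p * Real.logb 2 p - (1 - p) * Real.logb 2 (1 - p)
/-- Extension of a Pauli vector on `Q` to `Q ∪ {a}` (the ancilla is `none`), by zero. -/
def extendL (Q : Type) [Fintype Q] [DecidableEq Q] :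
    PauliSpace Q →ₗ[F2] PauliSpace (Option Q) where
  toFun v q := q.elim (0, 0) v
  map_add' a b := by funext q; cases q <;> simp
  map_smul' c a := by funext q; cases q <;> simp

/-!
Write `a` for the ancilla. Multiplying a Pauli vector `v` on `Q ∪ {a}` by the gauge element
`(X_q X_a)^{v_X(a)} Z_a^{v_Z(a)}` clears the ancilla. This gauge-fixing map `T = gaugeFix q`
is a retraction of the extension by zero, its kernel is spanned by the two new generators, and
it never increases the weight; hence `G' = T⁻¹ G`. Its symplectic adjoint `φ = ancillaLift q`,
`φ v = v + v_Z(q) Z_a`, is injective and maps `C(G)` onto `C(G')` and `S` onto `S'`, so `k` is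
unchanged, and adjointness gives `C(S') = T⁻¹ C(S)`. So `T` sends dressed logical operators of
`G'` to dressed logical operators of `G` of no larger weight, while extension by zero goes back
preserving the weight.
-/

lemma omegaF_comm {Q : Type} [Fintype Q] (u v : PauliSpace Q) : omegaF u v = omegaF v u :=
  Finset.sum_congr rfl fun _ _ => by ring

section Symplectic

variable {Q : Type} [Fintype Q] [DecidableEq Q]

lemma omegaF_add_right (u v w : PauliSpace Q) :
    omegaF u (v + w) = omegaF u v + omegaF u w := by
  rw [omegaF_comm, omegaF_add_left, omegaF_comm v, omegaF_comm w]

lemma omegaF_smul_right (c : F2) (u w : PauliSpace Q) :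
    omegaF u (c • w) = c * omegaF u w := by
  rw [omegaF_comm, omegaF_smul_left, omegaF_comm]

lemma omegaF_Xop (v : PauliSpace Q) (c : Q) : omegaF v (Xop c) = (v c).2 := by
  rw [omegaF, Finset.sum_eq_single c (fun b _ hb => by simp [Xop, hb]) (by simp)]
  simp [Xop]

lemma omegaF_Zop (v : PauliSpace Q) (c : Q) : omegaF v (Zop c) = (v c).1 := by
  rw [omegaF, Finset.sum_eq_single c (fun b _ hb => by simp [Zop, hb]) (by simp)]
  simp [Zop]

lemma mem_pcent_span_iff (s : Set (PauliSpace Q)) (v : PauliSpace Q) :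
    v ∈ pcent (Submodule.span F2 s) ↔ ∀ x ∈ s, omegaF v x = 0 := by
  refine ⟨fun h x hx => h x (Submodule.subset_span hx), fun h g hg => ?_⟩
  induction hg using Submodule.span_induction with
  | mem x hx => exact h x hx
  | zero => simp [omegaF]
  | add x y _ _ hx hy => rw [omegaF_add_right, hx, hy, add_zero]
  | smul c x _ hx => rw [omegaF_smul_right, hx, mul_zero]

lemma psupp_add_subset (u v : PauliSpace Q) : psupp (u + v) ⊆ psupp u ∪ psupp v := by
  intro c
  simp only [psupp, Finset.mem_union, Finset.mem_filter, Finset.mem_univ, true_and,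
    Pi.add_apply]
  contrapose!
  rintro ⟨hu, hv⟩
  rw [hu, hv]
  rfl

lemma pwt_add_le (u v : PauliSpace Q) : pwt (u + v) ≤ pwt u + pwt v :=
  (Finset.card_le_card (psupp_add_subset u v)).trans (Finset.card_union_le _ _)

lemma pwt_Xop (c : Q) : pwt (Xop c) = 1 := by
  rw [pwt, Finset.card_eq_one]
  exact ⟨c, Finset.ext fun b => by by_cases h : b = c <;> simp [psupp, Xop, h]⟩

end Symplectic

lemma mem_pcent_map_iff {Q Q' : Type} [Fintype Q'] [DecidableEq Q']
    (φ : PauliSpace Q →ₗ[F2] PauliSpace Q') (S : Submodule F2 (PauliSpace Q))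
    (v : PauliSpace Q') : v ∈ pcent (S.map φ) ↔ ∀ s ∈ S, omegaF v (φ s) = 0 := by
  refine ⟨fun h s hs => h _ (Submodule.mem_map_of_mem hs), ?_⟩
  rintro h _ ⟨s, hs, rfl⟩
  exact h s hs

section GaugeFix

variable {Q : Type}

def restrictL : PauliSpace (Option Q) →ₗ[F2] PauliSpace Q where
  toFun v q := v (some q)
  map_add' _ _ := rfl
  map_smul' _ _ := rfl

@[simp] lemma restrictL_apply (v : PauliSpace (Option Q)) (c : Q) :
    restrictL v c = v (some c) := rfl

lemma pwt_eq_pwt_restrictL_add [Fintype Q] (v : PauliSpace (Option Q)) :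
    pwt v = pwt (restrictL v) + if v none = 0 then 0 else 1 := by
  rw [pwt, pwt, psupp, psupp, Finset.card_filter, Finset.card_filter, Fintype.sum_option,
    Nat.add_comm]
  congr 1
  by_cases h : v none = 0 <;> simp_all [Prod.mk_zero_zero]

def gaugeFix [DecidableEq Q] (q : Q) : PauliSpace (Option Q) →ₗ[F2] PauliSpace Q :=
  restrictL + ((LinearMap.fst F2 F2 F2).comp (LinearMap.proj none)).smulRight (Xop q)

lemma gaugeFix_apply [DecidableEq Q] (q : Q) (v : PauliSpace (Option Q)) :
    gaugeFix q v = restrictL v + (v none).1 • Xop q := rfl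

lemma gaugeFix_Xop_add_Xop [DecidableEq Q] (q : Q) :
    gaugeFix q (Xop (some q) + Xop none) = 0 := by
  funext c
  by_cases hc : c = q
  · subst hc
    simp [gaugeFix_apply, Xop, Prod.ext_iff, CharTwo.add_self_eq_zero]
  · simp [gaugeFix_apply, Xop, hc, Prod.mk_zero_zero]

lemma gaugeFix_Zop_none [DecidableEq Q] (q : Q) : gaugeFix q (Zop none) = 0 := by
  funext c
  simp [gaugeFix_apply, Zop, Prod.mk_zero_zero]

end GaugeFix

section Ancilla

variable {Q : Type} [Fintype Q] [DecidableEq Q]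

def ancillaLift (q : Q) : PauliSpace Q →ₗ[F2] PauliSpace (Option Q) :=
  extendL Q + ((LinearMap.snd F2 F2 F2).comp (LinearMap.proj q)).smulRight (Zop none)

def ancillaGauge (G : Submodule F2 (PauliSpace Q)) (q : Q) :
    Submodule F2 (PauliSpace (Option Q)) :=
  Submodule.span F2 ((extendL Q '' (G : Set (PauliSpace Q))) ∪
    {Xop (some q) + Xop none, Zop none})

@[simp] lemma extendL_apply_none (v : PauliSpace Q) : extendL Q v none = 0 := rfl

@[simp] lemma extendL_apply_some (v : PauliSpace Q) (c : Q) : extendL Q v (some c) = v c := rfl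

lemma ancillaLift_apply (q : Q) (v : PauliSpace Q) :
    ancillaLift q v = extendL Q v + (v q).2 • Zop none := rfl

lemma ancillaLift_apply_none (q : Q) (v : PauliSpace Q) :
    ancillaLift q v none = (0, (v q).2) := by
  simp [ancillaLift_apply, Zop]

lemma ancillaLift_apply_some (q : Q) (v : PauliSpace Q) (c : Q) :
    ancillaLift q v (some c) = v c := by
  simp [ancillaLift_apply, Zop]

lemma restrictL_ancillaLift (q : Q) (v : PauliSpace Q) : restrictL (ancillaLift q v) = v :=
  funext (ancillaLift_apply_some q v)

lemma ancillaLift_injective (q : Q) : Function.Injective (ancillaLift q) :=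
  Function.LeftInverse.injective (restrictL_ancillaLift q)

lemma gaugeFix_extendL (q : Q) (v : PauliSpace Q) : gaugeFix q (extendL Q v) = v := by
  rw [gaugeFix_apply, extendL_apply_none, Prod.fst_zero, zero_smul, add_zero]
  rfl

lemma gaugeFix_ancillaLift (q : Q) (v : PauliSpace Q) : gaugeFix q (ancillaLift q v) = v := by
  rw [gaugeFix_apply, restrictL_ancillaLift, ancillaLift_apply_none, zero_smul, add_zero]

lemma omegaF_extendL (v : PauliSpace (Option Q)) (g : PauliSpace Q) :
    omegaF v (extendL Q g) = omegaF (restrictL v) g := by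
  simp [omegaF, Fintype.sum_option]

lemma omegaF_gaugeFix (q : Q) (v : PauliSpace (Option Q)) (s : PauliSpace Q) :
    omegaF (gaugeFix q v) s = omegaF v (ancillaLift q s) := by
  rw [gaugeFix_apply, ancillaLift_apply, omegaF_add_left, omegaF_smul_left, omegaF_comm (Xop q),
    omegaF_Xop, omegaF_add_right, omegaF_smul_right, omegaF_Zop, omegaF_extendL]
  ring

lemma pwt_extendL (v : PauliSpace Q) : pwt (extendL Q v) = pwt v := by
  rw [pwt_eq_pwt_restrictL_add, extendL_apply_none, if_pos rfl, add_zero]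
  rfl

lemma pwt_gaugeFix_le (q : Q) (v : PauliSpace (Option Q)) : pwt (gaugeFix q v) ≤ pwt v := by
  rw [pwt_eq_pwt_restrictL_add v, gaugeFix_apply]
  rcases (by decide : ∀ c : F2, c = 0 ∨ c = 1) (v none).1 with h | h
  · simp [h]
  · have hv : v none ≠ 0 := fun h0 => by simp [h0] at h
    simpa [h, hv, pwt_Xop] using pwt_add_le (restrictL v) (Xop q)

lemma eq_extendL_gaugeFix_add (q : Q) (v : PauliSpace (Option Q)) :
    v = extendL Q (gaugeFix q v) + (v none).1 • (Xop (some q) + Xop none)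
      + (v none).2 • Zop none := by
  funext o
  cases o with
  | none => simp [Xop, Zop]
  | some c =>
    by_cases hc : c = q
    · subst hc
      simp [gaugeFix_apply, Xop, Zop, Prod.ext_iff, add_assoc, CharTwo.add_self_eq_zero]
    · simp [gaugeFix_apply, Xop, Zop, hc, Prod.mk_zero_zero]

lemma ancillaGauge_eq_comap (G : Submodule F2 (PauliSpace Q)) (q : Q) :
    ancillaGauge G q = G.comap (gaugeFix q) := by
  refine le_antisymm (Submodule.span_le.mpr ?_) fun v hv => ?_
  · rintro _ (⟨g, hg, rfl⟩ | rfl | rfl)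
    · simpa [gaugeFix_extendL] using hg
    · simp [gaugeFix_Xop_add_Xop]
    · simp [gaugeFix_Zop_none]
  · rw [eq_extendL_gaugeFix_add q v]
    refine add_mem (add_mem ?_ (Submodule.smul_mem _ _ ?_)) (Submodule.smul_mem _ _ ?_)
    · exact Submodule.subset_span (Or.inl ⟨_, hv, rfl⟩)
    · exact Submodule.subset_span (Or.inr (Set.mem_insert _ _))
    · exact Submodule.subset_span (Or.inr (Set.mem_insert_of_mem _ rfl))

lemma mem_pcent_ancillaGauge_iff (G : Submodule F2 (PauliSpace Q)) (q : Q)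
    (v : PauliSpace (Option Q)) :
    v ∈ pcent (ancillaGauge G q) ↔
      restrictL v ∈ pcent G ∧ (v none).1 = 0 ∧ (v none).2 = (v (some q)).2 := by
  rw [ancillaGauge, mem_pcent_span_iff]
  simp only [Set.mem_union, or_imp, forall_and, Set.forall_mem_image, Set.forall_mem_insert,
    Set.mem_singleton_iff, forall_eq, omegaF_extendL, omegaF_add_right, omegaF_Xop, omegaF_Zop,
    CharTwo.add_eq_zero]
  exact ⟨fun ⟨hG, hq, ha⟩ => ⟨hG, ha, hq.symm⟩,
    fun ⟨hG, ha, hq⟩ => ⟨hG, hq.symm, ha⟩⟩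

lemma ancillaLift_restrictL_eq_self_iff (q : Q) (v : PauliSpace (Option Q)) :
    ancillaLift q (restrictL v) = v ↔ (v none).1 = 0 ∧ (v none).2 = (v (some q)).2 := by
  refine ⟨fun h => ?_, fun ⟨h1, h2⟩ => funext fun o => ?_⟩
  · rw [← h, ancillaLift_apply_none, ancillaLift_apply_some]
    exact ⟨rfl, rfl⟩
  · cases o with
    | none => rw [ancillaLift_apply_none, Prod.ext_iff, h1, h2]; exact ⟨rfl, rfl⟩
    | some c => exact ancillaLift_apply_some q _ c

lemma mem_map_ancillaLift_iff (q : Q) (S : Submodule F2 (PauliSpace Q))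
    (v : PauliSpace (Option Q)) :
    v ∈ S.map (ancillaLift q) ↔ restrictL v ∈ S ∧ ancillaLift q (restrictL v) = v := by
  refine ⟨?_, fun h => ⟨_, h⟩⟩
  rintro ⟨s, hs, rfl⟩
  rw [restrictL_ancillaLift]
  exact ⟨hs, rfl⟩

lemma pcent_ancillaGauge (G : Submodule F2 (PauliSpace Q)) (q : Q) :
    pcent (ancillaGauge G q) = (pcent G).map (ancillaLift q) := by
  ext v
  rw [mem_pcent_ancillaGauge_iff, mem_map_ancillaLift_iff, ancillaLift_restrictL_eq_self_iff]

lemma pstab_ancillaGauge (G : Submodule F2 (PauliSpace Q)) (q : Q) :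
    pstab (ancillaGauge G q) = (pstab G).map (ancillaLift q) := by
  have hcomp : gaugeFix q ∘ₗ ancillaLift q = LinearMap.id :=
    LinearMap.ext (gaugeFix_ancillaLift q)
  rw [pstab, pstab, pcent_ancillaGauge, ancillaGauge_eq_comap, inf_comm,
    Submodule.map_inf_eq_map_inf_comap, ← Submodule.comap_comp, hcomp, Submodule.comap_id,
    inf_comm]

lemma pcent_map_ancillaLift (q : Q) (S : Submodule F2 (PauliSpace Q)) :
    pcent (S.map (ancillaLift q)) = (pcent S).comap (gaugeFix q) := by
  ext v
  simp only [mem_pcent_map_iff, ← omegaF_gaugeFix]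
  rfl

lemma finrank_map_ancillaLift (q : Q) (S : Submodule F2 (PauliSpace Q)) :
    Module.finrank F2 (S.map (ancillaLift q)) = Module.finrank F2 S :=
  (Submodule.equivMapOfInjective _ (ancillaLift_injective q) S).finrank_eq.symm

lemma sInf_distSet_ancillaGauge (G : Submodule F2 (PauliSpace Q)) (q : Q) :
    sInf (distSet (ancillaGauge G q)) = sInf (distSet G) := by
  have hlogical : pcent (pstab (ancillaGauge G q)) = (pcent (pstab G)).comap (gaugeFix q) := by
    rw [pstab_ancillaGauge, pcent_map_ancillaLift]
  refine csInf_eq_csInf_of_forall_exists_le ?_ ?_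
  · rintro _ ⟨v, hv, hvG, rfl⟩
    refine ⟨pwt (gaugeFix q v), ⟨gaugeFix q v, ?_, ?_, rfl⟩, pwt_gaugeFix_le q v⟩
    · rwa [hlogical] at hv
    · rwa [ancillaGauge_eq_comap] at hvG
  · rintro _ ⟨v, hv, hvG, rfl⟩
    refine ⟨pwt v, ⟨extendL Q v, ?_, ?_, pwt_extendL v⟩, le_rfl⟩
    · rwa [hlogical, Submodule.mem_comap, gaugeFix_extendL]
    · rwa [ancillaGauge_eq_comap, Submodule.mem_comap, gaugeFix_extendL]

end Ancilla

/-- Lemma 1 of the paper: adjoining an ancillary qubit `a` and the gauge generators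
`X_q X_a` and `Z_a` preserves both the number of logical qubits and the distance. -/
theorem ancilla_extension_same_parameters {Q : Type} [Fintype Q] [DecidableEq Q]
    (G : Submodule F2 (PauliSpace Q)) (k : ℕ)
    (hk : Module.finrank F2 ↥(pcent G) = Module.finrank F2 ↥(pstab G) + 2 * k)
    (q : Q)
    (G' : Submodule F2 (PauliSpace (Option Q)))
    (hG' : G' = Submodule.span F2
      ((extendL Q '' (G : Set (PauliSpace Q))) ∪
        {Xop (some q) + Xop none, Zop none})) :
    Module.finrank F2 ↥(pcent G') = Module.finrank F2 ↥(pstab G') + 2 * k ∧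
    (1 ≤ k → sInf (distSet G') = sInf (distSet G)) := by
  obtain rfl : G' = ancillaGauge G q := hG'
  refine ⟨?_, fun _ => sInf_distSet_ancillaGauge G q⟩
  rw [pcent_ancillaGauge, pstab_ancillaGauge, finrank_map_ancillaLift, finrank_map_ancillaLift,
    hk]
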